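/- arXiv:2508.00511 — 4 statements merged into one kernel-verified Lean document; each statement's English description precedes it below -/
import Mathlib

section
/- Let φ be a binary relation between a set U of branches and a set V of nodes. Suppose there exist families (a_σ : σ ∈ 2^n) of branches and (b_τ : τ ∈ 2^{<n}) of nodes forming an n-tree for φ, i.e. φ(a_σ, b_{σ|i}) holds if and only if σ(i) = 0, for all σ ∈ 2^n and i < n. If n = 2^{k+1} − 2, then there exist branches a_0, …, a_{k−1} among the a_σ and nodes b_0, …, b_{k−1} among the b_τ such that φ(a_i, b_j) holds if and only if i ≤ j. -/
namespace Stmt0Aux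

variable {U V : Type*}

/-- The list of the first `i` values of `σ`. -/
def pre (σ : ℕ → Bool) (i : ℕ) : List Bool := (List.range i).map σ

/-- Prepend the list `ρ` to the sequence `σ`. -/
def app (ρ : List Bool) (σ : ℕ → Bool) : ℕ → Bool :=
  fun n => if h : n < ρ.length then ρ[n] else σ (n - ρ.length)

@[simp] lemma pre_length (σ : ℕ → Bool) (i : ℕ) : (pre σ i).length = i := by simp [pre]

@[simp] lemma pre_zero (σ : ℕ → Bool) : pre σ 0 = [] := by simp [pre]

lemma pre_succ (σ : ℕ → Bool) (i : ℕ) :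
    pre σ (i+1) = σ 0 :: pre (fun n => σ (n+1)) i := by
  simp [pre, List.range_succ_eq_map, List.map_map, Function.comp]

lemma app_lt (ρ : List Bool) (σ : ℕ → Bool) {n : ℕ} (h : n < ρ.length) :
    app ρ σ n = ρ[n] := dif_pos h

lemma app_add (ρ : List Bool) (σ : ℕ → Bool) (n : ℕ) :
    app ρ σ (ρ.length + n) = σ n := by
  unfold app
  rw [dif_neg (by omega)]
  congr 1
  omega

lemma pre_app_add (ρ : List Bool) (σ : ℕ → Bool) (i : ℕ) :
    pre (app ρ σ) (ρ.length + i) = ρ ++ pre σ i := by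
  apply List.ext_getElem (by simp)
  intro j h1 h2
  simp only [pre, List.getElem_map, List.getElem_range]
  by_cases hj : j < ρ.length
  · rw [List.getElem_append_left hj, app_lt _ _ hj]
  · rw [List.getElem_append_right (by omega)]
    have h3 : app ρ σ j = σ (j - ρ.length) := by
      have : j = ρ.length + (j - ρ.length) := by omega
      rw [this, app_add]
      congr 1
      omega
    rw [h3]
    simp [pre]


/-- `(A, B)` is a binary `φ`-tree of height `h`. -/
def Tr (φ : U → V → Prop) (h : ℕ) (A : (ℕ → Bool) → U) (B : List Bool → V) : Prop :=
  ∀ σ i, i < h → (φ (A σ) (B (pre σ i)) ↔ σ i = false)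

lemma Tr.mono {φ : U → V → Prop} {h h' : ℕ} (hle : h' ≤ h) {A : (ℕ → Bool) → U}
    {B : List Bool → V} (H : Tr φ h A B) : Tr φ h' A B :=
  fun σ i hi => H σ i (lt_of_lt_of_le hi hle)

lemma Tr.sub {φ : U → V → Prop} {h : ℕ} {A : (ℕ → Bool) → U} {B : List Bool → V}
    (H : Tr φ h A B) (ρ : List Bool) :
    Tr φ (h - ρ.length) (fun σ => A (app ρ σ)) (fun τ => B (ρ ++ τ)) := by
  intro σ i hi
  have := H (app ρ σ) (ρ.length + i) (by omega)
  rwa [pre_app_add, app_add] at this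

lemma Tr.at_zero {φ : U → V → Prop} {h : ℕ} {A : (ℕ → Bool) → U} {B : List Bool → V}
    (H : Tr φ h A B) (hh : 0 < h) (ζ : ℕ → Bool) :
    φ (A ζ) (B []) ↔ ζ 0 = false := by
  have := H ζ 0 hh
  rwa [pre_zero] at this

/-- A `P`-monochromatic (with value `fl`) tree-minor of height `s` inside `(A, B)`. -/
def Good (φ : U → V → Prop) (A : (ℕ → Bool) → U) (B : List Bool → V)
    (P : List Bool → Prop) (fl : Bool) (s m : ℕ) : Prop :=
  ∃ A' B', Tr φ s A' B' ∧ (∀ ζ, ∃ ζ', A' ζ = A ζ') ∧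
    ∀ τ : List Bool, τ.length < s → ∃ τ', τ'.length < m ∧ B' τ = B τ' ∧ (P τ' ↔ fl = true)

lemma Good.mono {φ : U → V → Prop} {A : (ℕ → Bool) → U} {B : List Bool → V}
    {P : List Bool → Prop} {fl : Bool} {s m s' m' : ℕ} (hs : s' ≤ s) (hm : m ≤ m')
    (G : Good φ A B P fl s m) : Good φ A B P fl s' m' := by
  obtain ⟨A', B', hT, hb, hn⟩ := G
  exact ⟨A', B', hT.mono hs, hb, fun τ hτ => by
    obtain ⟨τ', h1, h2, h3⟩ := hn τ (by omega)
    exact ⟨τ', by omega, h2, h3⟩⟩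

lemma Good.comp {φ : U → V → Prop} {A : (ℕ → Bool) → U} {B : List Bool → V}
    {P : List Bool → Prop} {fl : Bool} {s m : ℕ} (b : Bool)
    (G : Good φ (fun ζ => A (app [b] ζ)) (fun τ => B (b :: τ)) (fun τ => P (b :: τ)) fl s m) :
    Good φ A B P fl s (m+1) := by
  obtain ⟨A', B', hT, hb, hn⟩ := G
  refine ⟨A', B', hT, ?_, ?_⟩
  · intro ζ
    obtain ⟨ζ', hζ'⟩ := hb ζ
    exact ⟨app [b] ζ', hζ'⟩
  · intro τ hτ
    obtain ⟨τ', h1, h2, h3⟩ := hn τ hτ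
    exact ⟨b :: τ', by simpa using h1, h2, h3⟩


lemma glue (φ : U → V → Prop) {m s : ℕ} {A : (ℕ → Bool) → U} {B : List Bool → V}
    {P : List Bool → Prop} {fl : Bool} (hfl : P [] ↔ fl = true) (hA : Tr φ (m+1) A B)
    (h0 : Good φ (fun ζ => A (app [false] ζ)) (fun τ => B (false :: τ))
            (fun τ => P (false :: τ)) fl s m)
    (h1 : Good φ (fun ζ => A (app [true] ζ)) (fun τ => B (true :: τ))
            (fun τ => P (true :: τ)) fl s m) :
    Good φ A B P fl (s+1) (m+1) := by
  obtain ⟨A0, B0, hT0, hb0, hn0⟩ := h0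
  obtain ⟨A1, B1, hT1, hb1, hn1⟩ := h1
  refine ⟨fun ζ => cond (ζ 0) (A1 (fun n => ζ (n+1))) (A0 (fun n => ζ (n+1))),
          fun τ => match τ with | [] => B [] | b :: τ' => cond b (B1 τ') (B0 τ'), ?_, ?_, ?_⟩
  · intro σ i hi
    cases i with
    | zero =>
      rw [pre_zero]
      cases hσ : σ 0
      · simp only [hσ, cond_false]
        obtain ⟨ζ', hζ'⟩ := hb0 (fun n => σ (n+1))
        rw [hζ']
        rw [hA.at_zero (by omega)]
        rw [app_lt _ _ (by simp)]
        simp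
      · simp only [hσ, cond_true]
        obtain ⟨ζ', hζ'⟩ := hb1 (fun n => σ (n+1))
        rw [hζ']
        rw [hA.at_zero (by omega)]
        rw [app_lt _ _ (by simp)]
        simp
    | succ i =>
      rw [pre_succ]
      cases hσ : σ 0
      · simp only [hσ, cond_false]
        exact hT0 (fun n => σ (n+1)) i (by omega)
      · simp only [hσ, cond_true]
        exact hT1 (fun n => σ (n+1)) i (by omega)
  · intro ζ
    cases hζ : ζ 0
    · simp only [hζ, cond_false]
      obtain ⟨ζ', hζ'⟩ := hb0 (fun n => ζ (n+1))
      exact ⟨app [false] ζ', hζ'⟩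
    · simp only [hζ, cond_true]
      obtain ⟨ζ', hζ'⟩ := hb1 (fun n => ζ (n+1))
      exact ⟨app [true] ζ', hζ'⟩
  · intro τ hτ
    cases τ with
    | nil => exact ⟨[], by simp, rfl, hfl⟩
    | cons b τ' =>
      have hτ' : τ'.length < s := by simpa using hτ
      cases b
      · obtain ⟨τ'', h1', h2', h3'⟩ := hn0 τ' hτ'
        exact ⟨false :: τ'', by simpa using h1', h2', h3'⟩
      · obtain ⟨τ'', h1', h2', h3'⟩ := hn1 τ' hτ'
        exact ⟨true :: τ'', by simpa using h1', h2', h3'⟩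

lemma rec_minor (φ : U → V → Prop) :
    ∀ (m : ℕ) (A : (ℕ → Bool) → U) (B : List Bool → V), Tr φ m A B →
    ∀ P : List Bool → Prop,
    ∃ st sf, m ≤ st + sf ∧ Good φ A B P true st m ∧ Good φ A B P false sf m := by
  intro m
  induction m with
  | zero =>
    intro A B _ P
    refine ⟨0, 0, le_refl 0, ?_, ?_⟩ <;>
      exact ⟨A, B, fun σ i hi => absurd hi (by omega), fun ζ => ⟨ζ, rfl⟩,
        fun τ hτ => absurd hτ (by omega)⟩
  | succ m ihm =>
    intro A B hA P
    have h0 : Tr φ m (fun ζ => A (app [false] ζ)) (fun τ => B (false :: τ)) := by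
      simpa using hA.sub [false]
    have h1 : Tr φ m (fun ζ => A (app [true] ζ)) (fun τ => B (true :: τ)) := by
      simpa using hA.sub [true]
    obtain ⟨st0, sf0, hs0, Gt0, Gf0⟩ := ihm _ _ h0 (fun τ => P (false :: τ))
    obtain ⟨st1, sf1, hs1, Gt1, Gf1⟩ := ihm _ _ h1 (fun τ => P (true :: τ))
    by_cases hP : P []
    · rcases le_total st0 st1 with hle | hle
      · exact ⟨st0+1, sf0, by omega,
          glue φ (iff_of_true hP rfl) hA Gt0 (Gt1.mono hle le_rfl), Gf0.comp false⟩
      · exact ⟨st1+1, sf1, by omega,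
          glue φ (iff_of_true hP rfl) hA (Gt0.mono hle le_rfl) Gt1, Gf1.comp true⟩
    · rcases le_total sf0 sf1 with hle | hle
      · exact ⟨st0, sf0+1, by omega, Gt0.comp false,
          glue φ (iff_of_false hP (by simp)) hA Gf0 (Gf1.mono hle le_rfl)⟩
      · exact ⟨st1, sf1+1, by omega, Gt1.comp true,
          glue φ (iff_of_false hP (by simp)) hA (Gf0.mono hle le_rfl) Gf1⟩


lemma lem (φ : U → V → Prop) :
    ∀ (k h : ℕ) (A : (ℕ → Bool) → U) (B : List Bool → V), Tr φ h A B → 2^(k+1) - 2 ≤ h →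
    ∃ (Y : Fin (k+1) → ℕ → Bool) (W : Fin k → List Bool),
      (∀ j, (W j).length < h) ∧
      ∀ i j, (φ (A (Y i)) (B (W j)) ↔ (i : ℕ) ≤ (j : ℕ)) := by
  intro k
  induction k with
  | zero =>
    intro h A B _ _
    exact ⟨fun _ _ => false, fun j => j.elim0, fun j => j.elim0, fun i j => j.elim0⟩
  | succ k ih =>
    intro h A B hA hh
    have h1 : (2:ℕ) ≤ 2^(k+1) := by
      calc (2:ℕ) = 2^1 := rfl
      _ ≤ 2^(k+1) := Nat.pow_le_pow_right (by norm_num) (by omega)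
    have hpow : (2:ℕ)^(k+1+1) = 2*2^(k+1) := by rw [pow_succ]; ring
    have hh' : 2*(2^(k+1) - 2) + 2 ≤ h := by omega
    set f := 2^(k+1) - 2 with hf
    have hA0 : Tr φ (h-1) (fun ζ => A (app [false] ζ)) (fun τ => B (false :: τ)) := by
      simpa using hA.sub [false]
    obtain ⟨st, sf, hsum, Gt, Gf⟩ :=
      rec_minor φ (h-1) _ _ hA0 (fun τ => φ (A (fun _ => true)) (B (false :: τ)))
    by_cases hc : f ≤ sf
    · -- flag FALSE : the fixed branch `fun _ => true` is unrelated to all minor nodes;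
      -- it goes on top, with the root `[]` as the last node.
      obtain ⟨A', B', hT, hbr, hnd⟩ := Gf.mono hc le_rfl
      obtain ⟨Y', W', hlen', hst'⟩ := ih f A' B' hT le_rfl
      choose g hg0 using fun i => hbr (Y' i)
      have hg : ∀ i, A' (Y' i) = A (app [false] (g i)) := hg0
      choose t ht1 ht20 ht30 using fun j => hnd (W' j) (hlen' j)
      have ht2 : ∀ j, B' (W' j) = B (false :: t j) := ht20
      have ht3 : ∀ j, ¬ φ (A (fun _ => true)) (B (false :: t j)) :=
        fun j hφ => absurd ((ht30 j).mp hφ) (by simp)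
      refine ⟨fun i => if hi : (i:ℕ) < k+1 then app [false] (g ⟨i, hi⟩) else (fun _ => true),
              fun j => if hj : (j:ℕ) < k then false :: t ⟨j, hj⟩ else [], ?_, ?_⟩
      · intro j
        by_cases hj : (j:ℕ) < k
        · simp only [dif_pos hj, List.length_cons]
          have := ht1 ⟨j, hj⟩
          omega
        · simp only [dif_neg hj, List.length_nil]
          omega
      · intro i j
        have hik := i.isLt
        have hjk := j.isLt
        by_cases hi : (i:ℕ) < k+1 <;> by_cases hj : (j:ℕ) < k
        · simp only [dif_pos hi, dif_pos hj]
          have key := hst' ⟨i, hi⟩ ⟨j, hj⟩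
          rw [hg, ht2] at key
          exact key
        · simp only [dif_pos hi, dif_neg hj]
          refine iff_of_true ?_ (by omega)
          rw [hA.at_zero (by omega)]
          rw [app_lt _ _ (by simp)]
          rfl
        · simp only [dif_neg hi, dif_pos hj]
          refine iff_of_false ?_ (by omega)
          exact ht3 ⟨j, hj⟩
        · simp only [dif_neg hi, dif_neg hj]
          refine iff_of_false ?_ (by omega)
          rw [hA.at_zero (by omega)]
          simp
    · -- flag TRUE : the fixed branch `fun _ => true` is related to all minor nodes;
      -- it goes at the bottom, with the minor root as first node, and the staircase
      -- lives in the 1-subtree of the minor.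
      have hst0 : f + 1 ≤ st := by omega
      obtain ⟨A', B', hT, hbr, hnd⟩ := Gt.mono hst0 le_rfl
      obtain ⟨τσ, hτσ1, hτσ2, hτσ3⟩ := hnd [] (by simp)
      have hA1 : Tr φ f (fun ζ => A' (app [true] ζ)) (fun τ => B' (true :: τ)) := by
        have := hT.sub [true]
        simpa using this
      obtain ⟨Y'', W'', hlen'', hst''⟩ := ih f _ _ hA1 le_rfl
      have hτσ2' : B' [] = B (false :: τσ) := hτσ2
      have hτσ3' : φ (A (fun _ => true)) (B (false :: τσ)) := hτσ3.mpr rfl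
      choose g hg0 using fun i => hbr (app [true] (Y'' i))
      have hg : ∀ i, A' (app [true] (Y'' i)) = A (app [false] (g i)) := hg0
      choose t ht1 ht20 ht30 using fun j => hnd (true :: W'' j)
        (by simp only [List.length_cons]; have := hlen'' j; omega)
      have ht2 : ∀ j, B' (true :: W'' j) = B (false :: t j) := ht20
      have ht3 : ∀ j, φ (A (fun _ => true)) (B (false :: t j)) :=
        fun j => (ht30 j).mpr rfl
      refine ⟨fun i => if hi : 0 < (i:ℕ) then
                app [false] (g ⟨(i:ℕ)-1, by have := i.isLt; omega⟩) else (fun _ => true),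
              fun j => if hj : 0 < (j:ℕ) then
                false :: t ⟨(j:ℕ)-1, by have := j.isLt; omega⟩ else false :: τσ, ?_, ?_⟩
      · intro j
        by_cases hj : 0 < (j:ℕ)
        · simp only [dif_pos hj, List.length_cons]
          have := ht1 ⟨(j:ℕ)-1, by have := j.isLt; omega⟩
          omega
        · simp only [dif_neg hj, List.length_cons]
          omega
      · intro i j
        have hik := i.isLt
        have hjk := j.isLt
        by_cases hi : 0 < (i:ℕ) <;> by_cases hj : 0 < (j:ℕ)
        · simp only [dif_pos hi, dif_pos hj]
          have key := hst'' ⟨(i:ℕ)-1, by omega⟩ ⟨(j:ℕ)-1, by omega⟩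
          rw [hg, ht2] at key
          have key2 : φ (A (app [false] (g ⟨(i:ℕ)-1, by omega⟩)))
              (B (false :: t ⟨(j:ℕ)-1, by omega⟩)) ↔ ((i:ℕ)-1 ≤ (j:ℕ)-1) := key
          exact key2.trans (by omega)
        · simp only [dif_pos hi, dif_neg hj]
          refine iff_of_false ?_ (by omega)
          have hF : ¬ φ (A' (app [true] (Y'' ⟨(i:ℕ)-1, by omega⟩))) (B' []) := by
            rw [hT.at_zero (by omega)]
            rw [app_lt _ _ (by simp)]
            simp
          rw [hg, hτσ2'] at hF
          exact hF
        · simp only [dif_neg hi, dif_pos hj]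
          refine iff_of_true ?_ (by omega)
          exact ht3 ⟨(j:ℕ)-1, by omega⟩
        · simp only [dif_neg hi, dif_neg hj]
          refine iff_of_true ?_ (by omega)
          exact hτσ3'

lemma ofFn_take (σ : ℕ → Bool) {n i : ℕ} (h : i ≤ n) :
    (List.ofFn (fun j : Fin n => σ j)).take i = pre σ i := by
  apply List.ext_getElem
  · simp [h, pre]
  · intro j h1 h2
    simp [pre, List.getElem_take, List.getElem_ofFn]

end Stmt0Aux

theorem stmt0 {U V : Type*} (φ : U → V → Prop) (k n : ℕ) (hn : n = 2 ^ (k + 1) - 2)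
    (a : (Fin n → Bool) → U) (b : List Bool → V)
    (htree : ∀ (σ : Fin n → Bool) (i : ℕ) (hi : i < n),
      φ (a σ) (b ((List.ofFn σ).take i)) ↔ σ ⟨i, hi⟩ = false) :
    ∃ (as : Fin k → U) (bs : Fin k → V),
      (∀ i, ∃ σ, as i = a σ) ∧
      (∀ j, ∃ τ : List Bool, τ.length < n ∧ bs j = b τ) ∧
      (∀ i j, φ (as i) (bs j) ↔ i ≤ j) := by
  classical
  have htr : Stmt0Aux.Tr φ n (fun σ => a (fun i => σ i)) b := by
    intro σ i hi
    have := htree (fun j => σ j) i hi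
    rwa [Stmt0Aux.ofFn_take σ (le_of_lt hi)] at this
  obtain ⟨Y, W, hlen, hst⟩ := Stmt0Aux.lem φ k n _ b htr (by omega)
  refine ⟨fun i => a (fun j => Y i.castSucc j), fun j => b (W j), ?_, ?_, ?_⟩
  · intro i
    exact ⟨_, rfl⟩
  · intro j
    exact ⟨W j, hlen j, rfl⟩
  · intro i j
    have := hst i.castSucc j
    rw [Fin.le_def]
    exact this
end

section
/- Let X be a compact, Hausdorff, zero-dimensional (totally disconnected) topological space of finite Cantor–Bendixson rank, and let μ be a Borel regular probability measure on X. If U ⊆ X is a clopen set with μ(U) > 0, then for every ε > 0 one can partition U into finitely many pairwise disjoint clopen sets U_1, …, U_n such that each U_i contains a point x_i with μ({x_i}) > 0 and μ(U_i) ≤ μ({x_i})·(1+ε); in particular μ(U_i \ {x_i}) ≤ ε·μ({x_i}) for every i. -/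
open MeasureTheory

/-- Iterated Cantor–Bendixson derivatives of the space `X`. -/
def cbDeriv (X : Type*) [TopologicalSpace X] : ℕ → Set X
  | 0 => Set.univ
  | n + 1 => {x | x ∈ cbDeriv X n ∧ AccPt x (Filter.principal (cbDeriv X n))}

open Set
open scoped ENNReal Classical




section helpers
variable {X : Type*} [TopologicalSpace X] [CompactSpace X] [T2Space X]
    [TotallyDisconnectedSpace X]

omit [CompactSpace X] [TotallyDisconnectedSpace X] in
lemma isClosed_cbDeriv (n : ℕ) : IsClosed (cbDeriv X n) := by
  induction n with
  | zero => exact isClosed_univ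
  | succ n ih =>
      have : cbDeriv X (n+1) = cbDeriv X n ∩ derivedSet (cbDeriv X n) := rfl
      rw [this]
      exact ih.inter (isClosed_derivedSet _)

lemma exists_clopen_sep {x y : X} (h : x ≠ y) : ∃ V : Set X, IsClopen V ∧ x ∈ V ∧ y ∉ V := by
  obtain ⟨O, O', hO, hO', hx, hy, hd⟩ := t2_separation h
  obtain ⟨V, hV, hxV, hVO⟩ := compact_exists_isClopen_in_isOpen hO hx
  exact ⟨V, hV, hxV, fun hyV => (Set.disjoint_left.mp hd (hVO hyV)) hy⟩

lemma sep_finset (F : Finset X) (O : X → Set X) (hO : ∀ y ∈ F, IsOpen (O y) ∧ y ∈ O y) :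
    ∃ W : X → Set X, (∀ y ∈ F, IsClopen (W y) ∧ y ∈ W y ∧ W y ⊆ O y) ∧
      (↑F : Set X).PairwiseDisjoint W := by
  classical
  induction F using Finset.induction_on with
  | empty => exact ⟨fun _ => ∅, by simp, by simp⟩
  | @insert y F hyF ih =>
      obtain ⟨W, hW, hWd⟩ := ih (fun z hz => hO z (Finset.mem_insert_of_mem hz))
      obtain ⟨hOy, hyOy⟩ := hO y (Finset.mem_insert_self y F)
      obtain ⟨V, hV, hyV, hVO⟩ := compact_exists_isClopen_in_isOpen hOy hyOy
      have hsep : ∀ z : X, ∃ D : Set X, IsClopen D ∧ y ∈ D ∧ (z ∈ F → z ∉ D) := by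
        intro z
        by_cases hz : z ∈ F
        · obtain ⟨D, h1, h2, h3⟩ := exists_clopen_sep (fun e : y = z => hyF (e ▸ hz))
          exact ⟨D, h1, h2, fun _ => h3⟩
        · exact ⟨Set.univ, isClopen_univ, Set.mem_univ y, fun h => absurd h hz⟩
      choose D hDc hyD hzD using hsep
      set V' : Set X := V ∩ ⋂ z ∈ F, D z with hV'def
      have hV'clopen : IsClopen V' :=
        hV.inter (isClopen_biInter_finset fun z _ => hDc z)
      have hyV' : y ∈ V' := ⟨hyV, by simp only [Set.mem_iInter]; exact fun z hz => hyD z⟩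
      have hzV' : ∀ z ∈ F, z ∉ V' := by
        intro z hz hzmem
        obtain ⟨-, h2⟩ := hzmem
        simp only [Set.mem_iInter] at h2
        exact hzD z hz (h2 z hz)
      refine ⟨fun t => if t = y then V' else W t \ V', fun z hz => ?_, ?_⟩
      · rcases Finset.mem_insert.mp hz with rfl | hz
        · simp only [if_pos rfl]
          exact ⟨hV'clopen, hyV', (Set.inter_subset_left).trans hVO⟩
        · have hzy : z ≠ y := fun e => hyF (e ▸ hz)
          simp only [if_neg hzy]
          obtain ⟨h1, h2, h3⟩ := hW z hz
          exact ⟨h1.diff hV'clopen, ⟨h2, hzV' z hz⟩, (Set.diff_subset).trans h3⟩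
      · intro a ha b hb hab
        simp only [Finset.coe_insert, Set.mem_insert_iff, Finset.mem_coe] at ha hb
        rcases ha with rfl | ha <;> rcases hb with rfl | hb
        · exact absurd rfl hab
        · have hby : b ≠ a := fun e => hyF (e ▸ hb)
          simp only [Function.onFun, if_pos rfl, if_neg hby]
          exact Set.disjoint_sdiff_right
        · have hay : a ≠ b := fun e => hyF (e ▸ ha)
          simp only [Function.onFun, if_pos rfl, if_neg hay]
          exact Set.disjoint_sdiff_left
        · have hay : a ≠ y := fun e => hyF (e ▸ ha)
          have hby : b ≠ y := fun e => hyF (e ▸ hb)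
          simp only [Function.onFun, if_neg hay, if_neg hby]
          exact (hWd ha hb hab).mono (Set.diff_subset) (Set.diff_subset)
end helpers

section part2
variable {X : Type*} [TopologicalSpace X] [CompactSpace X] [T2Space X]
    [TotallyDisconnectedSpace X] [MeasurableSpace X] [BorelSpace X]
    (μ : Measure X)

lemma exists_clopen_small [μ.Regular] {x : X} {V : Set X} (hV : IsOpen V) (hx : x ∈ V)
    {r : ℝ≥0∞} (hr : μ {x} < r) :
    ∃ A : Set X, IsClopen A ∧ x ∈ A ∧ A ⊆ V ∧ μ A < r := by
  obtain ⟨O, hsub, hO, hμO⟩ := Set.exists_isOpen_lt_of_lt {x} r hr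
  obtain ⟨A, hA, hxA, hAsub⟩ :=
    compact_exists_isClopen_in_isOpen (hO.inter hV) ⟨hsub rfl, hx⟩
  exact ⟨A, hA, hxA, fun a ha => (hAsub ha).2,
    lt_of_le_of_lt (measure_mono fun a ha => (hAsub ha).1) hμO⟩

/-- A "good partition" of `U` at precision `ε`. -/
def GoodPart (ε : ℝ) (U : Set X) (P : Finset (Set X)) : Prop :=
  (∀ c ∈ P, IsClopen c) ∧ (↑P : Set (Set X)).PairwiseDisjoint id ∧ (⋃₀ ↑P) = U ∧
    ∀ c ∈ P, μ c = 0 ∨ ∃ x ∈ c, 0 < μ {x} ∧ μ c ≤ μ {x} * ENNReal.ofReal (1 + ε)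

variable {μ}

lemma GoodPart.mono {ε ε' : ℝ} (h : ε ≤ ε') {U : Set X} {P : Finset (Set X)}
    (hP : GoodPart μ ε U P) : GoodPart μ ε' U P := by
  obtain ⟨h1, h2, h3, h4⟩ := hP
  refine ⟨h1, h2, h3, fun c hc => ?_⟩
  rcases h4 c hc with h | ⟨x, hx, hx1, hx2⟩
  · exact Or.inl h
  · exact Or.inr ⟨x, hx, hx1, hx2.trans (mul_le_mul_right
      (ENNReal.ofReal_le_ofReal (by linarith)) _)⟩

lemma GoodPart.union {ε : ℝ} {U V : Set X} {P Q : Finset (Set X)} (hUV : Disjoint U V)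
    (hP : GoodPart μ ε U P) (hQ : GoodPart μ ε V Q) : GoodPart μ ε (U ∪ V) (P ∪ Q) := by
  classical
  obtain ⟨p1, p2, p3, p4⟩ := hP
  obtain ⟨q1, q2, q3, q4⟩ := hQ
  refine ⟨?_, ?_, ?_, ?_⟩
  · intro c hc
    rcases Finset.mem_union.mp hc with h | h
    exacts [p1 c h, q1 c h]
  · intro a ha b hb hab
    simp only [Finset.coe_union, Set.mem_union, Finset.mem_coe] at ha hb
    have key : ∀ c ∈ P, ∀ d ∈ Q, Disjoint (id c : Set X) (id d) := by
      intro c hc d hd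
      refine hUV.mono ?_ ?_
      · exact p3 ▸ Set.subset_sUnion_of_mem (by exact hc)
      · exact q3 ▸ Set.subset_sUnion_of_mem (by exact hd)
    rcases ha with ha | ha <;> rcases hb with hb | hb
    · exact p2 ha hb hab
    · exact key a ha b hb
    · exact (key b hb a ha).symm
    · exact q2 ha hb hab
  · rw [Finset.coe_union, Set.sUnion_union, p3, q3]
  · intro c hc
    rcases Finset.mem_union.mp hc with h | h
    exacts [p4 c h, q4 c h]

lemma goodPart_null {ε : ℝ} {U : Set X} (hU : IsClopen U) (h0 : μ U = 0) :
    GoodPart μ ε U {U} := by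
  refine ⟨by simpa using hU, by simp [Set.PairwiseDisjoint], by simp, by simpa using Or.inl h0⟩

lemma goodPart_exists_good {ε : ℝ} {U : Set X} {P : Finset (Set X)}
    (hP : GoodPart μ ε U P) (hpos : 0 < μ U) :
    ∃ c ∈ P, ∃ x ∈ c, 0 < μ {x} ∧ μ c ≤ μ {x} * ENNReal.ofReal (1 + ε) := by
  obtain ⟨-, -, h3, h4⟩ := hP
  by_contra hcon
  push_neg at hcon
  have : ∀ c ∈ P, μ c = 0 := by
    intro c hc
    rcases h4 c hc with h | ⟨x, hx, hx1, hx2⟩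
    · exact h
    · exact absurd hx2 (hcon c hc x hx hx1).not_ge
  have hle : μ U ≤ ∑ c ∈ P, μ c := by
    rw [← h3, Set.sUnion_eq_biUnion]
    simp only [Finset.mem_coe]
    exact measure_biUnion_finset_le P id
  rw [Finset.sum_eq_zero this] at hle
  exact absurd (le_antisymm hle (zero_le)) hpos.ne'
end part2
section part3
variable {X : Type*} [TopologicalSpace X] [CompactSpace X] [T2Space X]
    [TotallyDisconnectedSpace X] [MeasurableSpace X] [BorelSpace X]
    {μ : Measure X} [IsProbabilityMeasure μ] [μ.Regular]

lemma goodPart_empty {ε : ℝ} : GoodPart μ ε (∅ : Set X) (∅ : Finset (Set X)) := by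
  refine ⟨?_, ?_, ?_, ?_⟩ <;> simp

lemma subS (N : ℕ)
    (IH : ∀ U : Set X, IsClopen U → U ∩ cbDeriv X N = ∅ → ∀ ε : ℝ, 0 < ε →
      ∃ P, GoodPart μ ε U P)
    (A : Set X) (hA : IsClopen A) (y : X) (hy : A ∩ cbDeriv X N ⊆ {y})
    (ε : ℝ) (hε : 0 < ε) : ∃ P, GoodPart μ ε A P := by
  classical
  by_cases h0 : μ A = 0
  · exact ⟨{A}, goodPart_null hA h0⟩
  by_cases hyA : y ∈ A
  swap
  · refine IH A hA ?_ ε hε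
    refine Set.eq_empty_iff_forall_notMem.mpr (fun z hz => hyA ?_)
    have : z = y := hy hz
    exact this ▸ hz.1
  by_cases hμy : μ {y} = 0
  · -- null atom case
    have hposA : 0 < μ A := pos_iff_ne_zero.mpr h0
    obtain ⟨B, hB, hyB, hBA, hμB⟩ :=
      exists_clopen_small μ hA.isOpen hyA (show μ {y} < μ A from hμy ▸ hposA)
    have hABclopen : IsClopen (A \ B) := hA.diff hB
    have hABempty : (A \ B) ∩ cbDeriv X N = ∅ := by
      refine Set.eq_empty_iff_forall_notMem.mpr (fun z hz => ?_)
      have : z = y := hy ⟨hz.1.1, hz.2⟩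
      exact hz.1.2 (this ▸ hyB)
    have hε2 : 0 < ε / 2 := by linarith
    obtain ⟨Q1, hQ1⟩ := IH (A \ B) hABclopen hABempty (ε / 2) hε2
    have hposAB : 0 < μ (A \ B) := by
      rw [pos_iff_ne_zero]
      intro hz
      have hle : μ A ≤ μ B + μ (A \ B) := by
        conv_lhs => rw [← Set.union_diff_cancel hBA]
        exact measure_union_le _ _
      rw [hz, add_zero] at hle
      exact absurd hle hμB.not_ge
    obtain ⟨C, hCQ1, x, hxC, hμx, hCbound⟩ := goodPart_exists_good hQ1 hposAB
    have hrpos : (0 : ℝ≥0∞) < μ {x} * ENNReal.ofReal (ε / 2) :=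
      ENNReal.mul_pos hμx.ne' (ENNReal.ofReal_pos.mpr hε2).ne'
    obtain ⟨B', hB', hyB', hB'B, hμB'⟩ :=
      exists_clopen_small μ hB.isOpen hyB (show μ {y} < _ from hμy ▸ hrpos)
    have hBB'clopen : IsClopen (B \ B') := hB.diff hB'
    have hBB'empty : (B \ B') ∩ cbDeriv X N = ∅ := by
      refine Set.eq_empty_iff_forall_notMem.mpr (fun z hz => ?_)
      have : z = y := hy ⟨hBA hz.1.1, hz.2⟩
      exact hz.1.2 (this ▸ hyB')
    obtain ⟨Q2, hQ2⟩ := IH (B \ B') hBB'clopen hBB'empty ε hε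
    obtain ⟨a1, a2, a3, a4⟩ := hQ1
    obtain ⟨b1, b2, b3, b4⟩ := hQ2
    have hsubQ1 : ∀ c ∈ Q1, c ⊆ A \ B := fun c hc =>
      a3 ▸ Set.subset_sUnion_of_mem (Finset.mem_coe.mpr hc)
    have hsubQ2 : ∀ c ∈ Q2, c ⊆ B \ B' := fun c hc =>
      b3 ▸ Set.subset_sUnion_of_mem (Finset.mem_coe.mpr hc)
    have hdisjCB' : ∀ d ∈ (Q1.erase C) ∪ Q2, Disjoint (C ∪ B') d := by
      intro d hd
      rcases Finset.mem_union.mp hd with hd | hd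
      · have hdQ1 := Finset.mem_of_mem_erase hd
        have hdC : d ≠ C := Finset.ne_of_mem_erase hd
        refine Disjoint.union_left ?_ ?_
        · exact a2 (Finset.mem_coe.mpr hCQ1) (Finset.mem_coe.mpr hdQ1) (Ne.symm hdC)
        · exact (disjoint_sdiff_right : Disjoint B (A \ B)).mono hB'B
            ((hsubQ1 d hdQ1).trans (le_refl _))
      · refine Disjoint.union_left ?_ ?_
        · exact (disjoint_sdiff_left : Disjoint (A \ B) B).mono (hsubQ1 C hCQ1)
            ((hsubQ2 d hd).trans Set.diff_subset)
        · exact (disjoint_sdiff_right : Disjoint B' (B \ B')).mono (le_refl _) (hsubQ2 d hd)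
    refine ⟨insert (C ∪ B') ((Q1.erase C) ∪ Q2), ?_, ?_, ?_, ?_⟩
    · intro c hc
      rcases Finset.mem_insert.mp hc with rfl | hc
      · exact (a1 C hCQ1).union hB'
      · rcases Finset.mem_union.mp hc with hc | hc
        exacts [a1 c (Finset.mem_of_mem_erase hc), b1 c hc]
    · intro c hc d hd hcd
      simp only [Finset.coe_insert, Set.mem_insert_iff, Finset.mem_coe] at hc hd
      rcases hc with rfl | hc <;> rcases hd with rfl | hd
      · exact absurd rfl hcd
      · exact hdisjCB' d hd
      · exact (hdisjCB' c hc).symm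
      · rcases Finset.mem_union.mp hc with hc' | hc' <;>
          rcases Finset.mem_union.mp hd with hd' | hd'
        · exact a2 (Finset.mem_coe.mpr (Finset.mem_of_mem_erase hc'))
            (Finset.mem_coe.mpr (Finset.mem_of_mem_erase hd')) hcd
        · exact (disjoint_sdiff_left : Disjoint (A \ B) B).mono
            (hsubQ1 c (Finset.mem_of_mem_erase hc'))
            ((hsubQ2 d hd').trans Set.diff_subset)
        · exact ((disjoint_sdiff_left : Disjoint (A \ B) B).mono
            (hsubQ1 d (Finset.mem_of_mem_erase hd'))
            ((hsubQ2 c hc').trans Set.diff_subset)).symm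
        · exact b2 (Finset.mem_coe.mpr hc') (Finset.mem_coe.mpr hd') hcd
    · have hCU : C ∪ ⋃₀ ↑(Q1.erase C) = A \ B := by
        rw [← Set.sUnion_insert, ← Finset.coe_insert, Finset.insert_erase hCQ1, a3]
      rw [Finset.coe_insert, Set.sUnion_insert, Finset.coe_union, Set.sUnion_union, b3]
      have : (C ∪ B') ∪ (⋃₀ ↑(Q1.erase C) ∪ B \ B') =
          (C ∪ ⋃₀ ↑(Q1.erase C)) ∪ (B' ∪ B \ B') := by
        ext z
        simp only [Set.mem_union]
        tauto
      rw [this, hCU, Set.union_diff_cancel hB'B, Set.diff_union_of_subset hBA]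
    · intro c hc
      rcases Finset.mem_insert.mp hc with rfl | hc
      · refine Or.inr ⟨x, Or.inl hxC, hμx, ?_⟩
        calc μ (C ∪ B') ≤ μ C + μ B' := measure_union_le _ _
          _ ≤ μ {x} * ENNReal.ofReal (1 + ε / 2) + μ {x} * ENNReal.ofReal (ε / 2) :=
              add_le_add hCbound hμB'.le
          _ = μ {x} * ENNReal.ofReal (1 + ε) := by
              rw [← mul_add, ← ENNReal.ofReal_add (by linarith) (by linarith)]
              congr 2
              ring
      · rcases Finset.mem_union.mp hc with hc | hc
        · rcases a4 c (Finset.mem_of_mem_erase hc) with h | ⟨z, hz, hz1, hz2⟩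
          · exact Or.inl h
          · exact Or.inr ⟨z, hz, hz1, hz2.trans (mul_le_mul_right
              (ENNReal.ofReal_le_ofReal (by linarith)) _)⟩
        · exact b4 c hc
  · -- positive atom case
    have hposy : 0 < μ {y} := pos_iff_ne_zero.mpr hμy
    have hfin : μ {y} ≠ ⊤ := measure_ne_top μ _
    have h1lt : (1 : ℝ≥0∞) < ENNReal.ofReal (1 + ε) := by
      rw [← ENNReal.ofReal_one]
      exact (ENNReal.ofReal_lt_ofReal_iff (by linarith)).mpr (by linarith)
    have hr : μ {y} < μ {y} * ENNReal.ofReal (1 + ε) := by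
      calc μ {y} = μ {y} * 1 := (mul_one _).symm
        _ < _ := ENNReal.mul_lt_mul_right hμy hfin h1lt
    obtain ⟨B, hB, hyB, hBA, hμB⟩ := exists_clopen_small μ hA.isOpen hyA hr
    have hABclopen : IsClopen (A \ B) := hA.diff hB
    have hABempty : (A \ B) ∩ cbDeriv X N = ∅ := by
      refine Set.eq_empty_iff_forall_notMem.mpr (fun z hz => ?_)
      have : z = y := hy ⟨hz.1.1, hz.2⟩
      exact hz.1.2 (this ▸ hyB)
    obtain ⟨Q, hQ⟩ := IH (A \ B) hABclopen hABempty ε hε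
    have hBgood : GoodPart μ ε B {B} := by
      refine ⟨by simpa using hB, by simp, by simp, ?_⟩
      intro c hc
      rw [Finset.mem_singleton] at hc
      subst hc
      exact Or.inr ⟨y, hyB, hposy, hμB.le⟩
    refine ⟨{B} ∪ Q, ?_⟩
    have hres := hBgood.union (disjoint_sdiff_right : Disjoint B (A \ B)) hQ
    rwa [Set.union_diff_cancel hBA] at hres

end part3
section part4
variable {X : Type*} [TopologicalSpace X] [CompactSpace X] [T2Space X]
    [TotallyDisconnectedSpace X] [MeasurableSpace X] [BorelSpace X]
    {μ : Measure X} [IsProbabilityMeasure μ] [μ.Regular]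

lemma goodPart_biUnion {ε : ℝ} (F : Finset X) (W : X → Set X) :
    (↑F : Set X).PairwiseDisjoint W → (∀ y ∈ F, ∃ P, GoodPart μ ε (W y) P) →
    ∃ P, GoodPart μ ε (⋃ y ∈ F, W y) P := by
  classical
  induction F using Finset.induction_on with
  | empty =>
      intro _ _
      refine ⟨∅, ?_⟩
      simpa using (goodPart_empty (μ := μ) (ε := ε))
  | @insert y F hyF ih =>
      intro hd h
      obtain ⟨P1, h1⟩ := h y (Finset.mem_insert_self y F)
      obtain ⟨P2, h2⟩ := ih (hd.subset (by simp [Set.subset_insert])) fun z hz =>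
        h z (Finset.mem_insert_of_mem hz)
      have hdisj : Disjoint (W y) (⋃ z ∈ F, W z) := by
        rw [Set.disjoint_iUnion₂_right]
        intro z hz
        exact hd (by simp) (by simp [hz]) (fun e => hyF (e ▸ hz))
      refine ⟨P1 ∪ P2, ?_⟩
      have := h1.union hdisj h2
      rwa [show (⋃ z ∈ insert y F, W z) = W y ∪ ⋃ z ∈ F, W z from Finset.set_biUnion_insert _ _ _]
  
lemma keyP : ∀ (N : ℕ) (U : Set X), IsClopen U → U ∩ cbDeriv X N = ∅ → ∀ ε : ℝ, 0 < ε →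
    ∃ P, GoodPart μ ε U P := by
  intro N
  induction N with
  | zero =>
      intro U hU hUe ε hε
      have hUempty : U = ∅ := by simpa [cbDeriv] using hUe
      subst hUempty
      exact ⟨∅, goodPart_empty⟩
  | succ N IH =>
      intro U hU hUe ε hε
      classical
      set D := U ∩ cbDeriv X N with hD
      have hDcomp : IsCompact D := (hU.isClosed.inter (isClosed_cbDeriv N)).isCompact
      have hnbhd : ∀ y ∈ D, ∃ O : Set X, IsOpen O ∧ y ∈ O ∧ O ∩ cbDeriv X N ⊆ {y} := by
        intro y hyD
        have hynot : ¬ AccPt y (Filter.principal (cbDeriv X N)) := by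
          intro hacc
          have : y ∈ U ∩ cbDeriv X (N + 1) := ⟨hyD.1, hyD.2, hacc⟩
          rw [hUe] at this
          exact this
        rw [accPt_iff_nhds] at hynot
        push_neg at hynot
        obtain ⟨V, hV, hVy⟩ := hynot
        obtain ⟨O, hOV, hO, hyO⟩ := mem_nhds_iff.mp hV
        exact ⟨O, hO, hyO, fun z hz => hVy z ⟨hOV hz.1, hz.2⟩⟩
      choose! O hOopen hOmem hOsub using hnbhd
      have hcover : D ⊆ ⋃ y ∈ D, O y := fun z hz => Set.mem_biUnion hz (hOmem z hz)
      obtain ⟨t, htD, htfin, htcover⟩ :=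
        hDcomp.elim_finite_subcover_image (fun y hy => hOopen y hy) hcover
      set F : Finset X := htfin.toFinset with hFdef
      have hFD : ∀ y ∈ F, y ∈ D := fun y hy => htD (htfin.mem_toFinset.mp hy)
      obtain ⟨W, hW, hWd⟩ := sep_finset F (fun y => U ∩ O y)
        (fun y hyF => ⟨hU.isOpen.inter (hOopen y (hFD y hyF)),
          (hFD y hyF).1, hOmem y (hFD y hyF)⟩)
      have hWpart : ∀ y ∈ F, ∃ P, GoodPart μ ε (W y) P := by
        intro y hyF
        refine subS N IH (W y) (hW y hyF).1 y ?_ ε hε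
        intro z hz
        exact hOsub y (hFD y hyF) ⟨((hW y hyF).2.2 hz.1).2, hz.2⟩
      obtain ⟨PW, hPW⟩ := goodPart_biUnion F W hWd hWpart
      set R := U \ ⋃ y ∈ F, W y with hRdef
      have hRclopen : IsClopen R := hU.diff (isClopen_biUnion_finset fun y hy => (hW y hy).1)
      have hRempty : R ∩ cbDeriv X N = ∅ := by
        refine Set.eq_empty_iff_forall_notMem.mpr (fun z hz => ?_)
        have hzD : z ∈ D := ⟨hz.1.1, hz.2⟩
        obtain ⟨y, hyt, hzO⟩ := Set.mem_iUnion₂.mp (htcover hzD)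
        have hzy : z = y := hOsub y (htD hyt) ⟨hzO, hz.2⟩
        have hyF : y ∈ F := htfin.mem_toFinset.mpr hyt
        exact hz.1.2 (Set.mem_biUnion hyF (hzy ▸ (hW y hyF).2.1))
      obtain ⟨PR, hPR⟩ := IH R hRclopen hRempty ε hε
      refine ⟨PW ∪ PR, ?_⟩
      have hWU : (⋃ y ∈ F, W y) ⊆ U := by
        intro z hz
        obtain ⟨y, hyF, hzW⟩ := Set.mem_iUnion₂.mp hz
        exact ((hW y hyF).2.2 hzW).1
      have hres := hPW.union (disjoint_sdiff_right :
        Disjoint (⋃ y ∈ F, W y) (U \ ⋃ y ∈ F, W y)) hPR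
      rwa [Set.union_diff_cancel hWU] at hres

end part4
theorem stmt4 {X : Type*} [TopologicalSpace X] [CompactSpace X] [T2Space X]
    [TotallyDisconnectedSpace X] [MeasurableSpace X] [BorelSpace X]
    (hrank : ∃ N, cbDeriv X N = ∅)
    (μ : Measure X) [IsProbabilityMeasure μ] [μ.Regular]
    (U : Set X) (hU : IsClopen U) (hpos : 0 < μ U) (ε : ℝ) (hε : 0 < ε) :
    ∃ (n : ℕ) (Us : Fin n → Set X) (xs : Fin n → X),
      (∀ i, IsClopen (Us i)) ∧ Pairwise (Function.onFun Disjoint Us) ∧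
      (⋃ i, Us i) = U ∧
      ∀ i, xs i ∈ Us i ∧ 0 < μ {xs i} ∧
        μ (Us i) ≤ μ {xs i} * ENNReal.ofReal (1 + ε) ∧
        μ (Us i \ {xs i}) ≤ ENNReal.ofReal ε * μ {xs i} := by
  classical
  obtain ⟨N, hN⟩ := hrank
  obtain ⟨P, hP⟩ := keyP (μ := μ) N U hU (by rw [hN]; exact Set.inter_empty U) ε hε
  obtain ⟨p1, p2, p3, p4⟩ := hP
  set G : Finset (Set X) := P.filter (fun c => μ c ≠ 0) with hGdef
  have hGP : G ⊆ P := Finset.filter_subset _ _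
  have hgood : ∀ c ∈ G, ∃ x ∈ c, 0 < μ {x} ∧ μ c ≤ μ {x} * ENNReal.ofReal (1 + ε) := by
    intro c hc
    obtain ⟨hcP, hcne⟩ := Finset.mem_filter.mp hc
    rcases p4 c hcP with h | h
    · exact absurd h hcne
    · exact h
  choose! xf hxf1 hxf2 hxf3 using hgood
  obtain ⟨c0, hc0P, x0, hx0c, hx0pos, hx0b⟩ := goodPart_exists_good ⟨p1, p2, p3, p4⟩ hpos
  have hc0G : c0 ∈ G := by
    refine Finset.mem_filter.mpr ⟨hc0P, fun h => ?_⟩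
    have : μ {x0} ≤ μ c0 := measure_mono (Set.singleton_subset_iff.mpr hx0c)
    rw [h] at this
    exact absurd (le_antisymm this (zero_le)) hx0pos.ne'
  set Z : Set X := U \ ⋃₀ ↑G with hZdef
  have hGU : ⋃₀ ↑G ⊆ U := by
    rw [← p3]
    exact Set.sUnion_mono (by exact_mod_cast Finset.coe_subset.mpr hGP)
  have hsubG : ∀ c ∈ G, c ⊆ ⋃₀ ↑G := fun c hc =>
    Set.subset_sUnion_of_mem (Finset.mem_coe.mpr hc)
  have hμZ : μ Z = 0 := by
    have hsub : Z ⊆ ⋃ c ∈ P.filter (fun c => μ c = 0), c := by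
      intro z hz
      have hzU : z ∈ ⋃₀ ↑P := p3.symm ▸ hz.1
      obtain ⟨c, hcP, hzc⟩ := hzU
      rw [Finset.mem_coe] at hcP
      by_cases h : μ c = 0
      · exact Set.mem_biUnion (Finset.mem_filter.mpr ⟨hcP, h⟩) hzc
      · exact absurd (hsubG c (Finset.mem_filter.mpr ⟨hcP, h⟩) hzc) hz.2
    refine le_antisymm ?_ (zero_le)
    calc μ Z ≤ μ (⋃ c ∈ P.filter (fun c => μ c = 0), c) := measure_mono hsub
      _ ≤ ∑ c ∈ P.filter (fun c => μ c = 0), μ c := measure_biUnion_finset_le _ id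
      _ = 0 := Finset.sum_eq_zero (fun c hc => (Finset.mem_filter.mp hc).2)
  have hGclopen : IsClopen (⋃₀ (↑G : Set (Set X))) := by
    rw [Set.sUnion_eq_biUnion]
    exact Set.Finite.isClopen_biUnion G.finite_toSet (fun c hc => p1 c (hGP hc))
  have hZclopen : IsClopen Z := hU.diff hGclopen
  set e := G.equivFin with hedef
  set f : ↥G → Set X := fun c => if (↑c : Set X) = c0 then c0 ∪ Z else ↑c with hfdef
  have hfc : ∀ c : ↥G, (↑c : Set X) ⊆ f c := by
    intro c
    by_cases h : (↑c : Set X) = c0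
    · rw [hfdef]; simp only [if_pos h]; exact h ▸ Set.subset_union_left
    · rw [hfdef]; simp only [if_neg h]; exact subset_rfl
  have hfU : ∀ c : ↥G, f c ⊆ U := by
    intro c
    by_cases h : (↑c : Set X) = c0
    · simp only [hfdef, if_pos h]
      exact Set.union_subset ((hsubG c0 hc0G).trans hGU) Set.diff_subset
    · simp only [hfdef, if_neg h]
      exact (hsubG _ c.2).trans hGU
  have hkey : ∀ (S : Set X) (x : X), MeasurableSet S → x ∈ S →
      μ S ≤ μ {x} * ENNReal.ofReal (1 + ε) →
      μ (S \ {x}) ≤ ENNReal.ofReal ε * μ {x} := by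
    intro S x hS hxS hle
    have hsing : MeasurableSet ({x} : Set X) := isClosed_singleton.measurableSet
    have hadd : μ {x} + μ (S \ {x}) = μ S := by
      rw [← measure_union (disjoint_sdiff_right : Disjoint ({x} : Set X) (S \ {x}))
        (hS.diff hsing), Set.union_diff_cancel (Set.singleton_subset_iff.mpr hxS)]
    have hle2 : μ {x} + μ (S \ {x}) ≤ μ {x} + ENNReal.ofReal ε * μ {x} := by
      rw [hadd]
      calc μ S ≤ μ {x} * ENNReal.ofReal (1 + ε) := hle
        _ = μ {x} + ENNReal.ofReal ε * μ {x} := by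
            rw [ENNReal.ofReal_add (by norm_num) hε.le, mul_add, ENNReal.ofReal_one,
              mul_one, mul_comm]
    exact (ENNReal.add_le_add_iff_left (measure_ne_top μ _)).mp hle2
  refine ⟨G.card, fun i => f (e.symm i), fun i => xf ↑(e.symm i) (e.symm i).2, ?_, ?_, ?_, ?_⟩
  · intro i
    by_cases h : (↑(e.symm i) : Set X) = c0
    · simp only [hfdef, if_pos h]
      exact (p1 c0 hc0P).union hZclopen
    · simp only [hfdef, if_neg h]
      exact p1 _ (hGP (e.symm i).2)
  · intro i j hij
    have hcd : (↑(e.symm i) : Set X) ≠ ↑(e.symm j) :=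
      fun h => hij (e.symm.injective (Subtype.ext h))
    have hmemi : (↑(e.symm i) : Set X) ∈ P := hGP (e.symm i).2
    have hmemj : (↑(e.symm j) : Set X) ∈ P := hGP (e.symm j).2
    have base : Disjoint (↑(e.symm i) : Set X) ↑(e.symm j) :=
      p2 (Finset.mem_coe.mpr hmemi) (Finset.mem_coe.mpr hmemj) hcd
    have hZdisj : ∀ c : ↥G, Disjoint Z (↑c : Set X) :=
      fun c => (disjoint_sdiff_left : Disjoint Z (⋃₀ (↑G : Set (Set X)))).mono_right
        (hsubG _ c.2)
    show Disjoint (f (e.symm i)) (f (e.symm j))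
    by_cases h1 : (↑(e.symm i) : Set X) = c0 <;> by_cases h2 : (↑(e.symm j) : Set X) = c0
    · exact absurd (h1.trans h2.symm) hcd
    · simp only [hfdef, if_pos h1, if_neg h2]
      exact Disjoint.union_left (h1 ▸ base) (hZdisj (e.symm j))
    · simp only [hfdef, if_neg h1, if_pos h2]
      exact Disjoint.union_right (h2 ▸ base) ((hZdisj (e.symm i)).symm)
    · simp only [hfdef, if_neg h1, if_neg h2]
      exact base
  · have hre : (⋃ i, f (e.symm i)) = ⋃ c : ↥G, f c :=
      Function.Surjective.iUnion_comp e.symm.surjective f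
    rw [hre]
    refine Set.Subset.antisymm ?_ ?_
    · exact Set.iUnion_subset (fun c => hfU c)
    · intro z hzU
      by_cases hz : z ∈ ⋃₀ ↑G
      · obtain ⟨c, hcG, hzc⟩ := hz
        rw [Finset.mem_coe] at hcG
        exact Set.mem_iUnion.mpr ⟨⟨c, hcG⟩, hfc ⟨c, hcG⟩ hzc⟩
      · refine Set.mem_iUnion.mpr ⟨⟨c0, hc0G⟩, ?_⟩
        simp only [hfdef, if_pos rfl]
        exact Or.inr ⟨hzU, hz⟩
  · intro i
    set c : Set X := ↑(e.symm i) with hcdef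
    have hcG : c ∈ G := (e.symm i).2
    have hx1 : xf c hcG ∈ c := hxf1 c hcG
    have hx2 : 0 < μ {xf c hcG} := hxf2 c hcG
    have hx3 : μ c ≤ μ {xf c hcG} * ENNReal.ofReal (1 + ε) := hxf3 c hcG
    have hmem : xf c hcG ∈ f (e.symm i) := hfc (e.symm i) hx1
    have hbound : μ (f (e.symm i)) ≤ μ {xf c hcG} * ENNReal.ofReal (1 + ε) := by
      by_cases h : (↑(e.symm i) : Set X) = c0
      · simp only [hfdef, if_pos h]
        calc μ (c0 ∪ Z) ≤ μ c0 + μ Z := measure_union_le _ _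
          _ = μ c0 := by rw [hμZ, add_zero]
          _ ≤ μ {xf c hcG} * ENNReal.ofReal (1 + ε) := by rw [← h]; exact hx3
      · simp only [hfdef, if_neg h]
        exact hx3
    have hclopen : IsClopen (f (e.symm i)) := by
      by_cases h : (↑(e.symm i) : Set X) = c0
      · simp only [hfdef, if_pos h]
        exact (p1 c0 hc0P).union hZclopen
      · simp only [hfdef, if_neg h]
        exact p1 _ (hGP (e.symm i).2)
    exact ⟨hmem, hx2, hbound, hkey _ _ hclopen.isClosed.measurableSet hmem hbound⟩
end

section
/- Let G be a group, A ⊆ G, and k a natural number. Define Cay(G,A) = {(g,h) ∈ G × G : g⁻¹·h ∈ A} and φ(x,y) ⟺ (y·x ∈ A). For a binary relation R on G, let H_k(R) = {(a_1, b_1, …, a_k, b_k) ∈ G^{2k} : R(a_i, b_j) ⟺ i ≤ j}. Then the map sending (a_1, b_1, …, a_k, b_k) to (c_1, d_1, …, c_k, d_k) with c_i = b_{k−i+1} and d_i = a_{k−i+1}⁻¹ is a bijection from H_k(Cay(G,A)) onto H_k(φ). In particular, if G is finite then |H_k(Cay(G,A))| = |H_k(φ)|. -/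
/-- The set of half-graphs of height `k` induced by a relation `R`. -/
def halfGraphs {U V : Type*} (k : ℕ) (R : U → V → Prop) :
    Set ((Fin k → U) × (Fin k → V)) :=
  {p | ∀ i j, R (p.1 i) (p.2 j) ↔ i ≤ j}

theorem stmt7 {G : Type*} [Group G] (A : Set G) (k : ℕ) :
    Set.BijOn
      (fun p : (Fin k → G) × (Fin k → G) =>
        ((fun i => p.2 i.rev, fun i => (p.1 i.rev)⁻¹) : (Fin k → G) × (Fin k → G)))
      (halfGraphs k (fun g h : G => g⁻¹ * h ∈ A))
      (halfGraphs k (fun x y : G => y * x ∈ A)) ∧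
    (∀ _ : Finite G,
      (halfGraphs k (fun g h : G => g⁻¹ * h ∈ A)).ncard =
        (halfGraphs k (fun x y : G => y * x ∈ A)).ncard) := by
  set f : (Fin k → G) × (Fin k → G) → (Fin k → G) × (Fin k → G) :=
    fun p => ((fun i => p.2 i.rev, fun i => (p.1 i.rev)⁻¹)) with hf
  set g : (Fin k → G) × (Fin k → G) → (Fin k → G) × (Fin k → G) :=
    fun p => ((fun i => (p.2 i.rev)⁻¹, fun i => p.1 i.rev)) with hg
  have hmf : Set.MapsTo f (halfGraphs k (fun g h : G => g⁻¹ * h ∈ A))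
      (halfGraphs k (fun x y : G => y * x ∈ A)) := by
    intro p hp i j
    have := hp j.rev i.rev
    simpa [halfGraphs, f, Fin.rev_le_rev] using this
  have hmg : Set.MapsTo g (halfGraphs k (fun x y : G => y * x ∈ A))
      (halfGraphs k (fun g h : G => g⁻¹ * h ∈ A)) := by
    intro p hp i j
    have := hp j.rev i.rev
    simpa [halfGraphs, g, Fin.rev_le_rev] using this
  have hbij : Set.BijOn f (halfGraphs k (fun g h : G => g⁻¹ * h ∈ A))
      (halfGraphs k (fun x y : G => y * x ∈ A)) := by
    refine Set.InvOn.bijOn ⟨?_, ?_⟩ hmf hmg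
    · intro p _; simp [f, g, Fin.rev_rev]
    · intro p _; simp [f, g, Fin.rev_rev]
  exact ⟨hbij, fun _ => by rw [← hbij.image_eq, Set.ncard_image_of_injOn hbij.injOn]⟩
end

section
/- Let X be a compact topological space and ∼ the equivalence relation on X defined by x ∼ y iff cl({x}) = cl({y}). Suppose the topology of X is generated by a family of clopen sets closed under complementation. Then the quotient space X/∼ is compact, Hausdorff and zero-dimensional. -/
/-- The equivalence relation identifying points with the same closure. -/
def clSetoid (X : Type*) [TopologicalSpace X] : Setoid X :=
  ⟨fun x y => closure {x} = closure {y},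
    ⟨fun _ => rfl, Eq.symm, Eq.trans⟩⟩

theorem stmt9 {X : Type*} [TopologicalSpace X] [CompactSpace X]
    (C : Set (Set X)) (hclopen : ∀ s ∈ C, IsClopen s) (hcompl : ∀ s ∈ C, sᶜ ∈ C)
    (hgen : ‹TopologicalSpace X› = TopologicalSpace.generateFrom C) :
    CompactSpace (Quotient (clSetoid X)) ∧ T2Space (Quotient (clSetoid X)) ∧
      ∃ B : Set (Set (Quotient (clSetoid X))),
        (∀ u ∈ B, IsClopen u) ∧ TopologicalSpace.IsTopologicalBasis B := by
  classical
  set q : X → Quotient (clSetoid X) := Quotient.mk (clSetoid X) with hq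
  have hqm : Topology.IsQuotientMap q := isQuotientMap_quotient_mk'
  -- basis of X from subbasis
  have hB0 : TopologicalSpace.IsTopologicalBasis
      ((fun f : Set (Set X) => Set.sInter f) '' {f : Set (Set X) | f.Finite ∧ f ⊆ C}) :=
    TopologicalSpace.isTopologicalBasis_of_subbasis hgen
  -- relation characterization, forward direction
  have key : ∀ s ∈ C, ∀ x y : X, (clSetoid X).r x y → (x ∈ s ↔ y ∈ s) := by
    intro s hs x y hxy
    have hx : x ∈ closure ({y} : Set X) := by
      rw [← hxy]; exact subset_closure rfl
    have hy : y ∈ closure ({x} : Set X) := by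
      rw [hxy]; exact subset_closure rfl
    constructor
    · intro hxs
      rcases mem_closure_iff.mp hx s (hclopen s hs).isOpen hxs with ⟨z, hz1, hz2⟩
      rwa [show z = y from hz2] at hz1
    · intro hys
      rcases mem_closure_iff.mp hy s (hclopen s hs).isOpen hys with ⟨z, hz1, hz2⟩
      rwa [show z = x from hz2] at hz1
  -- separation: if x,y agree on all of C then related
  have sep : ∀ x y : X, (∀ s ∈ C, (x ∈ s ↔ y ∈ s)) → (clSetoid X).r x y := by
    intro x y h
    have hcl : ∀ a b : X, (∀ s ∈ C, a ∈ s → b ∈ s) → a ∈ closure ({b} : Set X) := by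
      intro a b hab
      rw [mem_closure_iff]
      intro U hU haU
      rcases hB0.isOpen_iff.mp hU a haU with ⟨v, ⟨f, ⟨hf1, hf2⟩, rfl⟩, hav, hvU⟩
      refine ⟨b, hvU ?_, rfl⟩
      intro s hs
      exact hab s (hf2 hs) (hav s hs)
    have h1 : x ∈ closure ({y} : Set X) := hcl x y fun s hs => (h s hs).mp
    have h2 : y ∈ closure ({x} : Set X) := hcl y x fun s hs => (h s hs).mpr
    exact le_antisymm
      (closure_minimal (Set.singleton_subset_iff.mpr h1) isClosed_closure)
      (closure_minimal (Set.singleton_subset_iff.mpr h2) isClosed_closure)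
  -- saturation of members of C and finite intersections
  have satC : ∀ s ∈ C, q ⁻¹' (q '' s) = s := by
    intro s hs
    apply Set.Subset.antisymm
    · rintro x ⟨y, hy, hxy⟩
      exact (key s hs y x (Quotient.exact hxy)).mp hy
    · exact Set.subset_preimage_image q s
  have satF : ∀ f : Set (Set X), f ⊆ C → q ⁻¹' (q '' Set.sInter f) = Set.sInter f := by
    intro f hf
    apply Set.Subset.antisymm
    · rintro x ⟨y, hy, hxy⟩ s hs
      exact (key s (hf hs) y x (Quotient.exact hxy)).mp (hy s hs)
    · exact Set.subset_preimage_image q _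
  -- clopenness of finite intersections
  have clopF : ∀ f : Set (Set X), f.Finite → f ⊆ C → IsClopen (Set.sInter f) := by
    intro f hfin hf
    refine ⟨?_, ?_⟩
    · exact isClosed_sInter fun s hs => (hclopen s (hf hs)).isClosed
    · exact Set.Finite.isOpen_sInter hfin fun s hs => (hclopen s (hf hs)).isOpen
  have clopQ : ∀ f : Set (Set X), f.Finite → f ⊆ C → IsClopen (q '' Set.sInter f) := by
    intro f hfin hf
    constructor
    · rw [← hqm.isClosed_preimage, satF f hf]
      exact (clopF f hfin hf).isClosed
    · rw [← hqm.isOpen_preimage, satF f hf]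
      exact (clopF f hfin hf).isOpen
  refine ⟨inferInstance, ?_, ?_⟩
  · -- T2
    refine ⟨fun a b hab => ?_⟩
    induction a using Quotient.inductionOn with | _ x =>
    induction b using Quotient.inductionOn with | _ y =>
    have hxy : ¬ (clSetoid X).r x y := fun h => hab (Quotient.sound h)
    have : ∃ t ∈ C, x ∈ t ∧ y ∉ t := by
      by_contra hcon
      push_neg at hcon
      apply hxy
      apply sep
      intro s hs
      constructor
      · intro hxs
        by_contra hys
        exact hys (hcon s hs hxs)
      · intro hys
        by_contra hxs
        exact (hcon sᶜ (hcompl s hs) hxs) hys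
    rcases this with ⟨t, ht, hxt, hyt⟩
    have hsat : q ⁻¹' (q '' t) = t := by
      have := satF {t} (by simpa using ht)
      simpa using this
    have hUo : IsOpen (q '' t) := by
      rw [← hqm.isOpen_preimage, hsat]; exact (hclopen t ht).isOpen
    have hVo : IsOpen (q '' t)ᶜ := by
      rw [← hqm.isOpen_preimage, Set.preimage_compl, hsat]
      exact (hclopen t ht).compl.isOpen
    refine ⟨q '' t, (q '' t)ᶜ, hUo, hVo, ⟨x, hxt, rfl⟩, ?_, disjoint_compl_right⟩
    intro hmem
    have : y ∈ q ⁻¹' (q '' t) := hmem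
    rw [hsat] at this
    exact hyt this
  · -- basis
    refine ⟨Set.image q '' ((fun f : Set (Set X) => Set.sInter f) '' {f | f.Finite ∧ f ⊆ C}),
      ?_, ?_⟩
    · rintro u ⟨v, ⟨f, ⟨hf1, hf2⟩, rfl⟩, rfl⟩
      exact clopQ f hf1 hf2
    · apply TopologicalSpace.isTopologicalBasis_of_isOpen_of_nhds
      · rintro u ⟨v, ⟨f, ⟨hf1, hf2⟩, rfl⟩, rfl⟩
        exact (clopQ f hf1 hf2).isOpen
      · intro a U haU hU
        induction a using Quotient.inductionOn with | _ x =>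
        have hxU : x ∈ q ⁻¹' U := haU
        rcases hB0.isOpen_iff.mp (hqm.isOpen_preimage.mpr hU) x hxU
          with ⟨v, ⟨f, ⟨hf1, hf2⟩, rfl⟩, hxv, hvU⟩
        refine ⟨q '' Set.sInter f, ⟨Set.sInter f, ⟨f, ⟨hf1, hf2⟩, rfl⟩, rfl⟩,
          ⟨x, hxv, rfl⟩, ?_⟩
        rintro b ⟨z, hz, rfl⟩
        exact hvU hz
end
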